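/- arXiv:1611.08883 — 2 statements merged into one kernel-verified Lean document; each statement's English description precedes it below -/
import Mathlib

section
/- Let λ > 0 and T > 0. For all η ∈ ℝ with |η| ≥ π/T and all ξ ∈ ℝ³, one has (|ξ|² − η²)² + λ²η²|ξ|⁴ ≥ c for some constant c = c(λ, T) > 0; consequently the function m(η, ξ) = 1/(|ξ|² − η² + iλη|ξ|²) is bounded on the region {|η| ≥ π/T} × ℝ³. -/
/-! If `|ξ|² ≤ η²/2` the real part `|ξ|² − η²` is at least `η²/2` in absolute value; otherwise
`|ξ|² > η²/2` and the imaginary part `λη|ξ|²` is at least `λ|η|³/2`. Either way the denominator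
stays away from zero once `η² ≥ (π/T)²`, so `m` is bounded by the inverse square root of that bound. -/

lemma min_le_sq_sub_add_mul_sq {a x y : ℝ} (lam : ℝ) (ha : 0 < a) (hy : a ≤ y) :
    min (a ^ 2 / 4) (lam ^ 2 * a ^ 3 / 4) ≤ (x - y) ^ 2 + lam ^ 2 * y * x ^ 2 := by
  rcases le_or_gt x (y / 2) with hxy | hxy
  · have hreal : a ^ 2 / 4 ≤ (x - y) ^ 2 := by nlinarith
    have himag : 0 ≤ lam ^ 2 * y * x ^ 2 := by have := ha.le.trans hy; positivity
    linarith [min_le_left (a ^ 2 / 4) (lam ^ 2 * a ^ 3 / 4)]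
  · have hcube : a ^ 3 / 4 ≤ y * x ^ 2 := calc
      a ^ 3 / 4 ≤ y * (y / 2) ^ 2 := by
        have := pow_le_pow_left₀ ha.le hy 3; nlinarith
      _ ≤ y * x ^ 2 := by gcongr <;> linarith
    have himag : lam ^ 2 * a ^ 3 / 4 ≤ lam ^ 2 * y * x ^ 2 := by
      rw [mul_assoc, mul_div_assoc]; gcongr
    linarith [min_le_right (a ^ 2 / 4) (lam ^ 2 * a ^ 3 / 4), sq_nonneg (x - y)]

lemma norm_one_div_le_of_le_normSq {z : ℂ} {c : ℝ} (hc : 0 < c) (h : c ≤ Complex.normSq z) :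
    ‖1 / z‖ ≤ 1 / Real.sqrt c := by
  have hsqrt : Real.sqrt c ≤ ‖z‖ := Complex.norm_def z ▸ Real.sqrt_le_sqrt h
  rw [norm_div, norm_one]
  exact one_div_le_one_div_of_le (Real.sqrt_pos.mpr hc) hsqrt

/-- For `λ, T > 0`, on the region `{|η| ≥ π/T} × ℝ³` the quantity
`(|ξ|² − η²)² + λ²η²|ξ|⁴` is bounded below by a positive constant `c = c(λ,T)`; consequently
`m(η,ξ) = 1/(|ξ|² − η² + iλη|ξ|²)` is bounded there. -/
theorem stmt1 (lam T : ℝ) (hlam : 0 < lam) (hT : 0 < T) :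
    ∃ c > 0, (∀ (η : ℝ) (ξ : EuclideanSpace ℝ (Fin 3)), Real.pi / T ≤ |η| →
        c ≤ (‖ξ‖ ^ 2 - η ^ 2) ^ 2 + lam ^ 2 * η ^ 2 * ‖ξ‖ ^ 4) ∧
      ∃ C : ℝ, ∀ (η : ℝ) (ξ : EuclideanSpace ℝ (Fin 3)), Real.pi / T ≤ |η| →
        ‖(1 / (((‖ξ‖ ^ 2 - η ^ 2 : ℝ) : ℂ) +
          Complex.I * ((lam * η * ‖ξ‖ ^ 2 : ℝ) : ℂ)))‖ ≤ C := by
  set a := (Real.pi / T) ^ 2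
  have ha : 0 < a := by positivity
  set c := min (a ^ 2 / 4) (lam ^ 2 * a ^ 3 / 4)
  have hc : 0 < c := lt_min (by positivity) (by positivity)
  have hlower : ∀ (η : ℝ) (ξ : EuclideanSpace ℝ (Fin 3)), Real.pi / T ≤ |η| →
      c ≤ (‖ξ‖ ^ 2 - η ^ 2) ^ 2 + lam ^ 2 * η ^ 2 * ‖ξ‖ ^ 4 := by
    intro η ξ hη
    have hη2 : a ≤ η ^ 2 := sq_abs η ▸ pow_le_pow_left₀ (by positivity) hη 2
    have := min_le_sq_sub_add_mul_sq lam (x := ‖ξ‖ ^ 2) ha hη2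
    convert this using 2; ring
  refine ⟨c, hc, hlower, 1 / Real.sqrt c, fun η ξ hη => norm_one_div_le_of_le_normSq hc ?_⟩
  rw [mul_comm Complex.I, Complex.normSq_add_mul_I]
  convert hlower η ξ hη using 2; ring
end

section
/- Let f : 𝕋 × ℝ³₊ → ℝ and define the even extension f̃(t, x′, x₃) = f(t, x′, |x₃|). If ũ is the unique purely periodic solution in 𝒮′ of ∂ₜ²ũ − Δũ − λ∂ₜΔũ = f̃ on 𝕋 × ℝ³, then ũ(t, x′, x₃) = ũ(t, x′, −x₃); in particular, if ũ is C¹ in x, ∂₃ũ vanishes on {x₃ = 0}. -/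
noncomputable section

open MeasureTheory

abbrev E3 := EuclideanSpace ℝ (Fin 3)

/-- Spatial partial derivative `∂ᵢ f`. -/
def Dx (f : E3 → ℝ) (i : Fin 3) (x : E3) : ℝ :=
  fderiv ℝ f x (EuclideanSpace.single i 1)

/-- Laplacian `Δf`. -/
def lapx (f : E3 → ℝ) (x : E3) : ℝ :=
  ∑ i : Fin 3, fderiv ℝ (fun y => Dx f i y) x (EuclideanSpace.single i 1)

/-- Time derivative `∂ₜ u`. -/
def dt (u : ℝ → E3 → ℝ) : ℝ → E3 → ℝ := fun t x => deriv (fun s => u s x) t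

/-- The damped wave operator `∂ₜ² − Δ − λ∂ₜΔ`. -/
def dwOp (lam : ℝ) (u : ℝ → E3 → ℝ) : ℝ → E3 → ℝ :=
  fun t x => dt (dt u) t x - lapx (u t) x - lam * dt (fun s y => lapx (u s) y) t x

/-- Reflection in the plane `{x₃ = 0}`. -/
def refl3 (x : E3) : E3 := WithLp.toLp 2 ![x 0, x 1, -(x 2)]

/-- Even extension `f̃(t,x′,x₃) = f(t,x′,|x₃|)` of a function given on the half-space. -/
def evenExt (f : ℝ → E3 → ℝ) : ℝ → E3 → ℝ :=
  fun t x => f t (WithLp.toLp 2 ![x 0, x 1, |x 2|])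

/-- A purely periodic (tempered, here: smooth with polynomial growth) solution of the
time-periodic damped wave equation with right-hand side `F`. -/
def GoodSol (lam T : ℝ) (F w : ℝ → E3 → ℝ) : Prop :=
  ContDiff ℝ (⊤ : ℕ∞) (Function.uncurry w) ∧
  (∀ t x, w (t + T) x = w t x) ∧
  (∀ x, (∫ s in (0 : ℝ)..T, w s x) = 0) ∧
  (∃ (C : ℝ) (m : ℕ), ∀ t x, |w t x| ≤ C * (1 + ‖x‖) ^ m) ∧
  (∀ t x, dwOp lam w t x = F t x)

/-!
Reflection in `{x₃ = 0}` commutes with the damped wave operator (it is a diagonal orthogonal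
map, so it changes the sign of `∂₃` and leaves `∂₃²` and hence `Δ` unchanged), and it fixes the
even extension `f̃`. So `ũ ∘ refl3` is again a purely periodic solution with the same right-hand
side, and uniqueness forces `ũ ∘ refl3 = ũ`. Differentiating this identity at a point of the
plane gives `∂₃ũ = -∂₃ũ` there.
-/

def refl3Sign : Fin 3 → ℝ := ![1, 1, -1]

lemma refl3Sign_mul_self (i : Fin 3) : refl3Sign i * refl3Sign i = 1 := by
  fin_cases i <;> norm_num [refl3Sign]

def refl3L : E3 →L[ℝ] E3 :=
  LinearMap.toContinuousLinearMap
    { toFun := refl3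
      map_add' := fun x y => by
        ext i; fin_cases i <;> simp [refl3]; ring
      map_smul' := fun c x => by
        ext i; fin_cases i <;> simp [refl3] }

@[simp]
lemma coe_refl3L : ⇑refl3L = refl3 := rfl

lemma refl3_single (i : Fin 3) :
    refl3 (EuclideanSpace.single i 1) = refl3Sign i • EuclideanSpace.single i 1 := by
  fin_cases i <;> (ext j; fin_cases j <;> simp [refl3, refl3Sign])

lemma norm_refl3 (x : E3) : ‖refl3 x‖ = ‖x‖ := by
  simp [EuclideanSpace.norm_eq, Fin.sum_univ_three, refl3]

lemma refl3_eq_self_of_coord_two_eq_zero {x : E3} (hx : x 2 = 0) : refl3 x = x := by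
  ext i; fin_cases i <;> simp [refl3, hx]

lemma evenExt_refl3 (f : ℝ → E3 → ℝ) (t : ℝ) (x : E3) :
    evenExt f t (refl3 x) = evenExt f t x := by
  simp [evenExt, refl3]

lemma fderiv_comp_refl3 {g : E3 → ℝ} {x : E3} (hg : DifferentiableAt ℝ g (refl3 x)) :
    fderiv ℝ (fun y => g (refl3 y)) x = (fderiv ℝ g (refl3 x)).comp refl3L := by
  rw [← coe_refl3L] at hg ⊢
  exact (fderiv_comp x hg refl3L.differentiableAt).trans (by rw [refl3L.fderiv])

lemma Dx_comp_refl3 {g : E3 → ℝ} {x : E3} (hg : DifferentiableAt ℝ g (refl3 x)) (i : Fin 3) :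
    Dx (fun y => g (refl3 y)) i x = refl3Sign i * Dx g i (refl3 x) := by
  simp [Dx, fderiv_comp_refl3 hg, refl3_single]

lemma lapx_comp_refl3 {g : E3 → ℝ} (hg : ContDiff ℝ 2 g) (x : E3) :
    lapx (fun y => g (refl3 y)) x = lapx g (refl3 x) := by
  refine Finset.sum_congr rfl fun i _ => ?_
  have hDg : Differentiable ℝ (Dx g i) :=
    ((hg.fderiv_right (m := 1) (by norm_num)).clm_apply contDiff_const).differentiable one_ne_zero
  have hDx : (fun y => Dx (fun z => g (refl3 z)) i y) =
      fun y => refl3Sign i * Dx g i (refl3 y) :=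
    funext fun y => Dx_comp_refl3 (hg.differentiable (by norm_num) _) i
  have hDg_refl : DifferentiableAt ℝ (fun y => Dx g i (refl3 y)) x :=
    (hDg _).comp x (coe_refl3L ▸ refl3L.differentiableAt)
  rw [hDx, fderiv_const_mul hDg_refl, fderiv_comp_refl3 (hDg _)]
  simp [refl3_single, ← mul_assoc, refl3Sign_mul_self]

lemma dwOp_comp_refl3 (lam : ℝ) {u : ℝ → E3 → ℝ} (hu : ∀ s, ContDiff ℝ 2 (u s))
    (t : ℝ) (x : E3) :
    dwOp lam (fun s y => u s (refl3 y)) t x = dwOp lam u t (refl3 x) := by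
  simp only [dwOp, dt, lapx_comp_refl3 (hu _)]

lemma GoodSol.comp_refl3 {lam T : ℝ} {F w : ℝ → E3 → ℝ} (hw : GoodSol lam T F w)
    (hF : ∀ t x, F t (refl3 x) = F t x) : GoodSol lam T F (fun t x => w t (refl3 x)) := by
  obtain ⟨hsmooth, hper, havg, ⟨C, m, hbd⟩, heq⟩ := hw
  have hslice : ∀ s, ContDiff ℝ 2 (w s) := fun s =>
    (hsmooth.comp (contDiff_const.prodMk contDiff_id)).of_le (by norm_cast)
  refine ⟨?_, fun t x => hper t _, fun x => havg _, ⟨C, m, fun t x => ?_⟩, fun t x => ?_⟩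
  · exact hsmooth.comp (contDiff_fst.prodMk (coe_refl3L ▸ refl3L.contDiff.comp contDiff_snd))
  · simpa [norm_refl3] using hbd t (refl3 x)
  · rw [dwOp_comp_refl3 lam hslice, heq, hF]

lemma Dx_two_eq_zero_of_comp_refl3_eq {g : E3 → ℝ} (hsymm : ∀ y, g (refl3 y) = g y) {x : E3}
    (hg : DifferentiableAt ℝ g x) (hx : x 2 = 0) : Dx g 2 x = 0 := by
  have hfix := refl3_eq_self_of_coord_two_eq_zero hx
  have hneg : Dx g 2 x = -Dx g 2 x := by
    conv_lhs => rw [← funext hsymm, Dx_comp_refl3 (by rwa [hfix]), hfix]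
    simp [refl3Sign]
  linarith

theorem stmt11_general (lam T : ℝ) (f : ℝ → E3 → ℝ)
    (util : ℝ → E3 → ℝ) (hsol : GoodSol lam T (evenExt f) util)
    (huniq : ∀ w, GoodSol lam T (evenExt f) w → w = util) :
    ∀ (t : ℝ) (x : E3), util t x = util t (refl3 x) ∧
      (x 2 = 0 → Dx (util t) 2 x = 0) := by
  have hsymm : ∀ t x, util t (refl3 x) = util t x := fun t x =>
    congrFun (congrFun (huniq _ (hsol.comp_refl3 (evenExt_refl3 f))) t) x
  have hdiff : ∀ t, Differentiable ℝ (util t) := fun t =>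
    (hsol.1.comp (contDiff_const.prodMk contDiff_id)).differentiable (by simp)
  exact fun t x => ⟨(hsymm t x).symm,
    Dx_two_eq_zero_of_comp_refl3_eq (hsymm t) (hdiff t x)⟩

/-- If `ũ` is the unique purely periodic solution of
`∂ₜ²ũ − Δũ − λ∂ₜΔũ = f̃` on `𝕋 × ℝ³`, where `f̃` is the even extension of `f`, then
`ũ(t,x′,x₃) = ũ(t,x′,−x₃)`; in particular (as `ũ` is `C¹` in `x`) `∂₃ũ` vanishes on
`{x₃ = 0}`. -/
theorem stmt11 (lam T : ℝ) (hlam : 0 < lam) (hT : 0 < T) (f : ℝ → E3 → ℝ)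
    (util : ℝ → E3 → ℝ) (hsol : GoodSol lam T (evenExt f) util)
    (huniq : ∀ w, GoodSol lam T (evenExt f) w → w = util) :
    ∀ (t : ℝ) (x : E3), util t x = util t (refl3 x) ∧
      (x 2 = 0 → Dx (util t) 2 x = 0) :=
  stmt11_general lam T f util hsol huniq
end
end
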